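/- arXiv:1904.10357 — 9 statements merged into one kernel-verified Lean document; each statement's English description precedes it below -/
import Mathlib

section
/- Let m ∈ ℕ and let G be an abelian group in which every element has order at most m. Suppose A is a finite symmetric subset of G containing 0 such that |A + A| ≤ K·|A|. Then A is contained in a finite subgroup H of G with |H| ≤ m^(K⁴)·K·|A|. -/
/-!
Plünnecke–Ruzsa gives `|4A| ≤ K⁴|A|`, so Ruzsa's covering lemma yields `F` with `|F| ≤ K⁴` and
`3A ⊆ F + (A - A) = F + 2A`. Then `⟨F⟩ + 2A` contains `0` and is stable under adding elements of
`A = -A`, so it contains `⟨A⟩`. Finally every element of `⟨F⟩` is a sum `∑ c_a • a` with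
`c_a < addOrderOf a ≤ m`, so `|⟨F⟩| ≤ m ^ |F|`.
-/

open Finset Pointwise

namespace AddSubgroup

variable {G : Type*} [AddCommGroup G]

lemma coe_closure_subset_range_sum_nsmul {m : ℕ} {F : Finset G}
    (hF : ∀ a ∈ F, 0 < addOrderOf a ∧ addOrderOf a ≤ m) :
    (closure (F : Set G) : Set G) ⊆
      Set.range fun c : F → Fin m => ∑ a, (c a : ℕ) • (a : G) := by
  intro x hx
  have hfin : ∀ a ∈ (F : Set G), IsOfFinAddOrder a := fun a ha =>
    addOrderOf_pos_iff.1 (hF a ha).1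
  rw [SetLike.mem_coe, ← mem_toAddSubmonoid, closure_toAddSubmonoid_of_isOfFinAddOrder hfin,
    AddSubmonoid.mem_closure_finset'] at hx
  obtain ⟨c, rfl⟩ := hx
  refine ⟨fun a => ⟨c a % addOrderOf (a : G),
    (Nat.mod_lt _ (hF a a.2).1).trans_le (hF a a.2).2⟩, ?_⟩
  simp only [mod_addOrderOf_nsmul]

lemma finite_closure_of_addOrderOf_le {m : ℕ} {F : Finset G}
    (hF : ∀ a ∈ F, 0 < addOrderOf a ∧ addOrderOf a ≤ m) :
    (closure (F : Set G) : Set G).Finite :=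
  (Set.finite_range _).subset (coe_closure_subset_range_sum_nsmul hF)

lemma natCard_closure_le_pow {m : ℕ} {F : Finset G}
    (hF : ∀ a ∈ F, 0 < addOrderOf a ∧ addOrderOf a ≤ m) :
    Nat.card (closure (F : Set G)) ≤ m ^ #F := by
  calc Nat.card (closure (F : Set G))
    _ ≤ Nat.card (Set.range fun c : F → Fin m => ∑ a, (c a : ℕ) • (a : G)) :=
      Nat.card_mono (Set.finite_range _) (coe_closure_subset_range_sum_nsmul hF)
    _ ≤ Nat.card (F → Fin m) := Finite.card_range_le _
    _ = m ^ #F := by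
      rw [Nat.card_fun, Nat.card_eq_finsetCard, Nat.card_eq_fintype_card, Fintype.card_fin]

lemma coe_closure_subset_closure_add_add {A F : Set G} (hA : A.Nonempty) (hsym : -A = A)
    (hcov : A + A + A ⊆ F + (A + A)) :
    (closure A : Set G) ⊆ closure F + (A + A) := by
  have add_left : ∀ x ∈ A, ∀ y ∈ (closure F : Set G) + (A + A),
      x + y ∈ (closure F : Set G) + (A + A) := by
    rintro x hx _ ⟨c, hc, s, hs, rfl⟩
    obtain ⟨f, hf, s', hs', hfs⟩ := hcov (by rw [add_assoc]; exact Set.add_mem_add hx hs)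
    refine ⟨c + f, add_mem hc (subset_closure hf), s', hs', ?_⟩
    change c + f + s' = x + (c + s)
    rw [add_assoc, show f + s' = x + s from hfs, add_left_comm]
  intro x hx
  induction hx using closure_induction_left with
  | zero =>
    obtain ⟨a, ha⟩ := hA
    have hna : -a ∈ A := by rw [← hsym]; simpa using ha
    exact ⟨0, zero_mem _, a + -a, Set.add_mem_add ha hna, by simp⟩
  | add_left x hx y _ ih => exact add_left x hx y ih
  | neg_add_cancel x hx y _ ih => exact add_left (-x) (by rw [← hsym]; simpa using hx) y ih

end AddSubgroup

namespace Finset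

variable {G : Type*} [AddCommGroup G] [DecidableEq G]

lemma card_nsmul_le_pow_mul_card {A : Finset G} {K : ℝ} (hA : A.Nonempty)
    (hK : (#(A + A) : ℝ) ≤ K * #A) (n : ℕ) :
    (#(n • A) : ℝ) ≤ K ^ n * #A := by
  have hApos : (0 : ℝ) < #A := by exact_mod_cast hA.card_pos
  have hratio : (#(A + A) : ℝ) / #A ≤ K := (div_le_iff₀ hApos).2 hK
  calc (#(n • A) : ℝ) ≤ ((#(A + A) : ℝ) / #A) ^ n * #A := by
        have h := NNRat.cast_le (K := ℝ) |>.2 (pluennecke_ruzsa_inequality_nsmul_add hA A n)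
        push_cast at h
        exact h
    _ ≤ K ^ n * #A := by gcongr

end Finset

theorem stmt_5_general {G : Type*} [AddCommGroup G] [DecidableEq G]
    (m : ℕ) (horder : ∀ g : G, 0 < addOrderOf g ∧ addOrderOf g ≤ m)
    (A : Finset G) (K : ℝ)
    (hsym : -A = A) (h0 : (0 : G) ∈ A)
    (hdoub : ((A + A).card : ℝ) ≤ K * A.card) :
    ∃ H : AddSubgroup G, (A : Set G) ⊆ H ∧
      (Nat.card H : ℝ) ≤ (m : ℝ) ^ (K ^ 4) * K * A.card := by
  have hA : A.Nonempty := ⟨0, h0⟩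
  have hm : (1 : ℝ) ≤ m := by exact_mod_cast addOrderOf_zero (G := G) ▸ (horder 0).2
  have h4 : (#(A + A + A + A) : ℝ) ≤ K ^ 4 * #A := by
    simpa [succ_nsmul, add_assoc] using card_nsmul_le_pow_mul_card hA hdoub 4
  obtain ⟨F, -, hFcard, hcov⟩ := ruzsa_covering_add hA h4
  rw [sub_eq_add_neg, hsym] at hcov
  have hclosure := AddSubgroup.coe_closure_subset_closure_add_add (F := (F : Set G))
    (coe_nonempty.2 hA) (by rw [← coe_neg, hsym]) (by exact_mod_cast hcov)
  have hfin := AddSubgroup.finite_closure_of_addOrderOf_le (F := F) fun a _ => horder a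
  refine ⟨AddSubgroup.closure A, AddSubgroup.subset_closure, ?_⟩
  have hcard : Nat.card (AddSubgroup.closure (A : Set G)) ≤ m ^ #F * #(A + A) := calc
    _ ≤ Nat.card ((AddSubgroup.closure (F : Set G) : Set G) + ((A + A : Finset G) : Set G)) :=
      Nat.card_mono (hfin.add (A + A).finite_toSet) (by exact_mod_cast hclosure)
    _ ≤ Nat.card (AddSubgroup.closure (F : Set G)) * #(A + A) :=
      Set.natCard_add_le.trans_eq (congrArg _ (Nat.card_eq_finsetCard _))
    _ ≤ m ^ #F * #(A + A) := by
      gcongr; exact AddSubgroup.natCard_closure_le_pow fun a _ => horder a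
  calc (Nat.card (AddSubgroup.closure (A : Set G)) : ℝ)
    _ ≤ (m : ℝ) ^ (#F : ℝ) * #(A + A) := by rw [Real.rpow_natCast]; exact_mod_cast hcard
    _ ≤ (m : ℝ) ^ (K ^ 4) * (K * #A) := by gcongr
    _ = (m : ℝ) ^ (K ^ 4) * K * #A := by ring

theorem stmt_5 {G : Type*} [AddCommGroup G] [DecidableEq G]
    (m : ℕ) (horder : ∀ g : G, 0 < addOrderOf g ∧ addOrderOf g ≤ m)
    (A : Finset G) (K : ℝ) (hK : 1 ≤ K)
    (hsym : -A = A) (h0 : (0 : G) ∈ A)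
    (hdoub : ((A + A).card : ℝ) ≤ K * A.card) :
    ∃ H : AddSubgroup G, (A : Set G) ⊆ H ∧
      (Nat.card H : ℝ) ≤ (m : ℝ) ^ (K ^ 4) * K * A.card :=
  stmt_5_general m horder A K hsym h0 hdoub
end

section
/- (Plünnecke–Ruzsa) Let G be an abelian group and A a finite nonempty subset with |A + A| ≤ K·|A|. Then for all natural numbers m, n with m + n ≥ 1, |mA − nA| ≤ K^(m+n)·|A|. -/
open Finset Pointwise

theorem stmt_6_general {G : Type*} [AddCommGroup G] [DecidableEq G]
    (A : Finset G) (hA : A.Nonempty) (K : ℝ)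
    (hdoub : ((A + A).card : ℝ) ≤ K * A.card)
    (m n : ℕ) :
    ((m • A - n • A).card : ℝ) ≤ K ^ (m + n) * A.card := by
  have hratio : ((A + A).card / A.card : ℝ) ≤ K :=
    (div_le_iff₀ (by exact_mod_cast hA.card_pos)).2 hdoub
  have hpr := NNRat.cast_le (K := ℝ) |>.2
    (pluennecke_ruzsa_inequality_nsmul_sub_nsmul_add hA A m n)
  push_cast at hpr
  calc ((m • A - n • A).card : ℝ) ≤ ((A + A).card / A.card : ℝ) ^ (m + n) * A.card := hpr
    _ ≤ K ^ (m + n) * A.card := by gcongr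

theorem stmt_6 {G : Type*} [AddCommGroup G] [DecidableEq G]
    (A : Finset G) (hA : A.Nonempty) (K : ℝ) (hK : 1 ≤ K)
    (hdoub : ((A + A).card : ℝ) ≤ K * A.card)
    (m n : ℕ) (hmn : 1 ≤ m + n) :
    ((m • A - n • A).card : ℝ) ≤ K ^ (m + n) * A.card :=
  stmt_6_general A hA K hdoub m n
end

section
/- (Ruzsa) Let A be a finite symmetric subset of a group G containing the identity with |A³| ≤ K·|A|. Then for every m ≥ 3, |A^m| ≤ K^(m−2)·|A|. -/
open Finset Pointwise

theorem stmt_9_general {G : Type*} [Group G] [DecidableEq G]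
    (A : Finset G) (K : ℝ)
    (hsym : A⁻¹ = A)
    (h3 : ((A ^ 3).card : ℝ) ≤ K * A.card)
    (m : ℕ) (hm : 3 ≤ m) :
    ((A ^ m).card : ℝ) ≤ K ^ (m - 2) * A.card :=
  small_pow_of_small_tripling hm h3 hsym

theorem stmt_9 {G : Type*} [Group G] [DecidableEq G]
    (A : Finset G) (K : ℝ) (hK : 1 ≤ K)
    (hsym : A⁻¹ = A) (hone : (1 : G) ∈ A)
    (h3 : ((A ^ 3).card : ℝ) ≤ K * A.card)
    (m : ℕ) (hm : 3 ≤ m) :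
    ((A ^ m).card : ℝ) ≤ K ^ (m - 2) * A.card :=
  stmt_9_general A K hsym h3 m hm
end

section
/- Let A be a finite symmetric subset of a group G containing the identity with |A³| ≤ K·|A|. Then A² is a K⁴-approximate subgroup of G. -/
open Finset Pointwise

theorem stmt_10 {G : Type*} [Group G] [DecidableEq G]
    (A : Finset G) (K : ℝ) (hK : 1 ≤ K)
    (hsym : A⁻¹ = A) (hone : (1 : G) ∈ A)
    (h3 : ((A ^ 3).card : ℝ) ≤ K * A.card) :
    (A ^ 2)⁻¹ = A ^ 2 ∧ (1 : G) ∈ A ^ 2 ∧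
      ∃ X : Finset G, (X.card : ℝ) ≤ K ^ 4 ∧ (A ^ 2) * (A ^ 2) ⊆ X * (A ^ 2) := by
  have hA : IsApproximateSubgroup (K ^ 4) (A ^ 2 : Set G) :=
    (IsApproximateSubgroup.of_small_tripling hone hsym h3).mono
      (pow_le_pow_right₀ hK (by norm_num))
  obtain ⟨X, hX, hcover⟩ := hA.sq_covBySMul
  refine ⟨mod_cast hA.inv_eq_self, mod_cast hA.one_mem, X, hX, ?_⟩
  rw [← coe_subset]
  simpa [sq] using hcover
end

section
/- (Helfgott) Let G and Z be groups, π : G → Z a homomorphism, and A a finite symmetric subset of G containing the identity. Then for every m ≥ 1, |π(A)^m| / |π(A)| ≤ |A^(m+2)| / |A|. -/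
/-!
Fix a fibre `F = {a ∈ A | π a = z}` and pick a preimage `b_w ∈ A ^ m` of each `w ∈ π(A) ^ m`.
The translates `b_w F ⊆ A ^ (m + 1)` lie over the distinct points `w z`, so they are pairwise
disjoint and `|π(A) ^ m| |F| ≤ |A ^ (m + 1)|`. Summing over the `|π(A)|` fibres, which partition
`A`, gives `|π(A) ^ m| |A| ≤ |π(A)| |A ^ (m + 1)| ≤ |π(A)| |A ^ (m + 2)|`.
-/

open Finset Pointwise

section

variable {G Z : Type*} [Group G] [Group Z] [DecidableEq G] [DecidableEq Z]

theorem card_image_mul_card_fiber_le_card_mul (π : G →* Z) (B A : Finset G) (z : Z) :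
    #(B.image π) * #{a ∈ A | π a = z} ≤ #(B * A) := by
  have hsection : ∀ w ∈ B.image π, ∃ b ∈ B, π b = w := fun w hw => by simpa using hw
  choose! s hsB hsπ using hsection
  rw [← card_product]
  refine card_le_card_of_injOn (fun p => s p.1 * p.2) ?_ ?_
  · rintro ⟨w, a⟩ hwa
    simp only [coe_product, Set.mem_prod, mem_coe, mem_filter] at hwa
    exact mul_mem_mul (hsB w hwa.1) hwa.2.1
  · rintro ⟨w, a⟩ hwa ⟨w', a'⟩ hwa' heq
    simp only [coe_product, Set.mem_prod, mem_coe, mem_filter] at hwa hwa' heq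
    obtain rfl : w = w' := by
      simpa [hsπ w hwa.1, hsπ w' hwa'.1, hwa.2.2, hwa'.2.2] using congrArg π heq
    rw [mul_left_cancel heq]

theorem card_image_pow_mul_card_le (π : G →* Z) (A : Finset G) (m : ℕ) :
    #(A.image π ^ m) * #A ≤ #(A.image π) * #(A ^ (m + 1)) :=
  calc #(A.image π ^ m) * #A
      = ∑ z ∈ A.image π, #(A.image π ^ m) * #{a ∈ A | π a = z} := by
        rw [← mul_sum, ← card_eq_sum_card_image π A]
    _ ≤ ∑ _z ∈ A.image π, #(A ^ (m + 1)) := by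
        gcongr with z
        rw [← image_pow, pow_succ]
        exact card_image_mul_card_fiber_le_card_mul π _ _ z
    _ = #(A.image π) * #(A ^ (m + 1)) := by rw [sum_const, smul_eq_mul]

end

theorem stmt_12_general {G Z : Type*} [Group G] [Group Z] [DecidableEq G] [DecidableEq Z]
    (π : G →* Z) (A : Finset G)
    (m : ℕ) :
    (((A.image π) ^ m).card : ℝ) / (A.image π).card ≤ ((A ^ (m + 2)).card : ℝ) / A.card := by
  obtain rfl | hA := A.eq_empty_or_nonempty
  · simp
  have hP : (0 : ℝ) < #(A.image π) := by exact_mod_cast (hA.image π).card_pos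
  rw [div_le_div_iff₀ hP (by exact_mod_cast hA.card_pos)]
  have hstep : #(A ^ (m + 1)) ≤ #(A ^ (m + 2)) := card_pow_mono m.succ_ne_zero (by omega)
  calc (#(A.image π ^ m) : ℝ) * #A ≤ #(A.image π) * #(A ^ (m + 1)) := by
        exact_mod_cast card_image_pow_mul_card_le π A m
    _ ≤ #(A ^ (m + 2)) * #(A.image π) := by
        rw [mul_comm]
        gcongr

theorem stmt_12 {G Z : Type*} [Group G] [Group Z] [DecidableEq G] [DecidableEq Z]
    (π : G →* Z) (A : Finset G)
    (hsym : A⁻¹ = A) (hone : (1 : G) ∈ A)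
    (m : ℕ) (hm : 1 ≤ m) :
    (((A.image π) ^ m).card : ℝ) / (A.image π).card ≤ ((A ^ (m + 2)).card : ℝ) / A.card :=
  stmt_12_general π A m
end

section
/- Let A be a finite symmetric subset of a group G containing the identity with |A³| ≤ K·|A|, and let π : G → Z be a homomorphism. Then |π(A)³| ≤ K³·|π(A)|. -/
/-!
Translating the fibre of `π` over one point of `π(A)` by representatives of the points of `π(A³)`
gives disjoint subsets of `A⁴`. Summing over the fibres, `|π(A)³| |A| ≤ |π(A)| |A⁴|`, and
`|A⁴| ≤ K² |A|` for a symmetric set of tripling `K`.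
-/

open Finset Pointwise

namespace Finset

variable {G Z F : Type*} [DecidableEq G] [DecidableEq Z]

theorem card_image_mul_card_fiber_le_card_mul [CancelMonoid G] [CancelMonoid Z] [FunLike F G Z]
    [MulHomClass F G Z] (π : F) (A B : Finset G) (z : Z) :
    #(B.image π) * #{a ∈ A | π a = z} ≤ #(B * A) := by
  obtain ⟨B', hB'B, hinj, hB'⟩ := exists_subset_injOn_image_eq_of_surjOn (f := π) B (B.image π)
    (by simpa using Set.surjOn_image π B)
  have hmul_inj : (B' ×ˢ {a ∈ A | π a = z} : Set (G × G)).InjOn fun p => p.1 * p.2 := by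
    rintro ⟨b₁, a₁⟩ ⟨hb₁, ha₁⟩ ⟨b₂, a₂⟩ ⟨hb₂, ha₂⟩ h
    simp only [mem_coe, mem_filter] at ha₁ ha₂ h
    have hb : b₁ = b₂ := hinj hb₁ hb₂ <| mul_right_cancel (b := z) <| by
      simpa only [map_mul, ha₁.2, ha₂.2] using congrArg π h
    subst hb
    simp [mul_left_cancel h]
  calc #(B.image π) * #{a ∈ A | π a = z}
      = #(B' * {a ∈ A | π a = z}) := by
        rw [← hB', card_image_of_injOn hinj, card_mul_iff.2 hmul_inj]
    _ ≤ #(B * A) := card_le_card (mul_subset_mul (mod_cast hB'B) (filter_subset _ _))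

theorem card_image_mul_card_le_card_image_mul_card_mul [CancelMonoid G] [CancelMonoid Z]
    [FunLike F G Z] [MulHomClass F G Z] (π : F) (A B : Finset G) :
    #(B.image π) * #A ≤ #(A.image π) * #(B * A) := by
  rw [card_eq_sum_card_image π A, mul_sum, ← smul_eq_mul]
  exact sum_le_card_nsmul _ _ _ fun z _ => card_image_mul_card_fiber_le_card_mul π A B z

theorem card_image_pow_three_le_of_small_tripling [Group G] [CancelMonoid Z] [FunLike F G Z]
    [MonoidHomClass F G Z] (π : F) {A : Finset G} {K : ℝ} (hA : A.Nonempty) (hAsymm : A⁻¹ = A)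
    (hA3 : #(A ^ 3) ≤ K * #A) :
    #(A.image π ^ 3) ≤ K ^ 2 * #(A.image π) := by
  have hA4 : (#(A ^ 4) : ℝ) ≤ K ^ 2 * #A := small_pow_of_small_tripling (by norm_num) hA3 hAsymm
  have hcount : (#((A ^ 3).image π) : ℝ) * #A ≤ #(A.image π) * #(A ^ 4) := by
    have := card_image_mul_card_le_card_image_mul_card_mul π A (A ^ 3)
    rw [← pow_succ] at this
    exact_mod_cast this
  rw [← image_pow]
  refine le_of_mul_le_mul_right ?_ (by exact_mod_cast hA.card_pos : (0 : ℝ) < #A)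
  calc (#((A ^ 3).image π) : ℝ) * #A ≤ #(A.image π) * #(A ^ 4) := hcount
    _ ≤ #(A.image π) * (K ^ 2 * #A) := by gcongr
    _ = K ^ 2 * #(A.image π) * #A := by ring

end Finset

theorem stmt_13 {G Z : Type*} [Group G] [Group Z] [DecidableEq G] [DecidableEq Z]
    (π : G →* Z) (A : Finset G) (K : ℝ) (hK : 1 ≤ K)
    (hsym : A⁻¹ = A) (hone : (1 : G) ∈ A)
    (h3 : ((A ^ 3).card : ℝ) ≤ K * A.card) :
    (((A.image π) ^ 3).card : ℝ) ≤ K ^ 3 * (A.image π).card := calc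
  (((A.image π) ^ 3).card : ℝ) ≤ K ^ 2 * (A.image π).card :=
    card_image_pow_three_le_of_small_tripling π ⟨1, hone⟩ hsym h3
  _ ≤ K ^ 3 * (A.image π).card :=
    mul_le_mul_of_nonneg_right (pow_le_pow_right₀ hK (by norm_num)) (Nat.cast_nonneg _)
end

section
/- Let A and B be finite symmetric subsets of a group G, each containing the identity. Then for all m, n ≥ 2, |A^m ∩ B^n| / |A² ∩ B²| ≤ (|A^(m+1)|/|A|) · (|B^(n+1)|/|B|). -/
/-!
Send a triple `(x, a, b) ∈ X × A × B` to `(x a, x b, x⁻¹ y)`, where `y` is any fixed element, chosen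
from `(x a, x b)` alone, with `y⁻¹ x a ∈ A` and `y⁻¹ x b ∈ B` (such a `y` exists, e.g. `y = x`).
The last coordinate `x⁻¹ y = a (y⁻¹ x a)⁻¹ = b (y⁻¹ x b)⁻¹` lies in `A A⁻¹ ∩ B B⁻¹`, and the map is
injective because `y` is determined by the first two coordinates, which then give back `x`, `a`, `b`.
Hence `|X| |A| |B| ≤ |X A| |X B| |A A⁻¹ ∩ B B⁻¹|`; take `X = A^m ∩ B^n`, so that `X A ⊆ A^(m+1)`,
`X B ⊆ B^(n+1)`, and `A A⁻¹ = A²`, `B B⁻¹ = B²` by symmetry.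
-/

open Finset Pointwise

theorem Finset.card_mul_card_mul_card_le_card_mul_card_mul_card_inter {G : Type*} [Group G]
    [DecidableEq G] (X A B : Finset G) :
    #X * #A * #B ≤ #(X * A) * #(X * B) * #((A * A⁻¹) ∩ (B * B⁻¹)) := by
  have : Nonempty G := ⟨1⟩
  set f : G → G → G := fun u v => Classical.epsilon fun y => y⁻¹ * u ∈ A ∧ y⁻¹ * v ∈ B
  have hf {x a b : G} (ha : a ∈ A) (hb : b ∈ B) :
      (f (x * a) (x * b))⁻¹ * (x * a) ∈ A ∧ (f (x * a) (x * b))⁻¹ * (x * b) ∈ B :=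
    Classical.epsilon_spec (p := fun y => y⁻¹ * (x * a) ∈ A ∧ y⁻¹ * (x * b) ∈ B)
      ⟨x, by simpa using ha, by simpa using hb⟩
  have hcard := card_le_card_of_injOn
    (s := X ×ˢ A ×ˢ B) (t := (X * A) ×ˢ (X * B) ×ˢ ((A * A⁻¹) ∩ (B * B⁻¹)))
    (fun p => (p.1 * p.2.1, p.1 * p.2.2, p.1⁻¹ * f (p.1 * p.2.1) (p.1 * p.2.2)))
    (by
      rintro ⟨x, a, b⟩ hp
      simp only [coe_product, coe_inter, Set.mem_prod, Set.mem_inter_iff, mem_coe] at hp ⊢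
      obtain ⟨hx, ha, hb⟩ := hp
      obtain ⟨hyA, hyB⟩ := hf (x := x) ha hb
      refine ⟨mul_mem_mul hx ha, mul_mem_mul hx hb, ?_, ?_⟩
      · convert mul_mem_mul ha (inv_mem_inv hyA) using 1
        group
      · convert mul_mem_mul hb (inv_mem_inv hyB) using 1
        group)
    (by
      rintro ⟨x, a, b⟩ - ⟨x', a', b'⟩ - h
      simp only [Prod.mk.injEq] at h
      obtain ⟨hxa, hxb, hy⟩ := h
      rw [hxa, hxb, mul_left_inj, inv_inj] at hy
      subst hy
      simp_all)
  simpa only [card_product, mul_assoc] using hcard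

theorem stmt_14_general {G : Type*} [Group G] [DecidableEq G]
    (A B : Finset G)
    (hAsym : A⁻¹ = A)
    (hBsym : B⁻¹ = B)
    (m n : ℕ) :
    ((A ^ m ∩ B ^ n).card : ℝ) / ((A ^ 2 ∩ B ^ 2).card) ≤
      (((A ^ (m + 1)).card : ℝ) / A.card) * (((B ^ (n + 1)).card : ℝ) / B.card) := by
  obtain hD | hD := (#(A ^ 2 ∩ B ^ 2)).eq_zero_or_pos
  · rw [hD, Nat.cast_zero, div_zero]
    positivity
  obtain ⟨hA, hB⟩ : A.Nonempty ∧ B.Nonempty := by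
    obtain ⟨g, hg⟩ := card_pos.1 hD
    rw [mem_inter, sq, sq] at hg
    exact ⟨Nonempty.of_mul_left ⟨g, hg.1⟩, Nonempty.of_mul_left ⟨g, hg.2⟩⟩
  have hXA : #((A ^ m ∩ B ^ n) * A) ≤ #(A ^ (m + 1)) :=
    card_le_card (pow_succ A m ▸ mul_subset_mul_right inter_subset_left)
  have hXB : #((A ^ m ∩ B ^ n) * B) ≤ #(B ^ (n + 1)) :=
    card_le_card (pow_succ B n ▸ mul_subset_mul_right inter_subset_right)
  have key : #(A ^ m ∩ B ^ n) * #A * #B ≤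
      #((A ^ m ∩ B ^ n) * A) * #((A ^ m ∩ B ^ n) * B) * #(A ^ 2 ∩ B ^ 2) := by
    simpa only [hAsym, hBsym, sq] using
      card_mul_card_mul_card_le_card_mul_card_mul_card_inter (A ^ m ∩ B ^ n) A B
  rw [div_mul_div_comm, div_le_div_iff₀ (by positivity) (by simp [hA.card_pos, hB.card_pos]),
    ← mul_assoc]
  exact_mod_cast key.trans (by gcongr)

theorem stmt_14 {G : Type*} [Group G] [DecidableEq G]
    (A B : Finset G)
    (hAsym : A⁻¹ = A) (hAone : (1 : G) ∈ A)
    (hBsym : B⁻¹ = B) (hBone : (1 : G) ∈ B)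
    (m n : ℕ) (hm : 2 ≤ m) (hn : 2 ≤ n) :
    ((A ^ m ∩ B ^ n).card : ℝ) / ((A ^ 2 ∩ B ^ 2).card) ≤
      (((A ^ (m + 1)).card : ℝ) / A.card) * (((B ^ (n + 1)).card : ℝ) / B.card) :=
  stmt_14_general A B hAsym hBsym m n
end

section
/- Let A and B be finite symmetric subsets of a group G containing the identity with |A³| ≤ K·|A| and |B³| ≤ L·|B|. Then |(A² ∩ B²)³| ≤ (KL)⁵·|A² ∩ B²|. -/
/-!
Counting triples `(x, a, b) ∈ X × A × B` through the pair `(x a, x b) ∈ XA × XB`: two triples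
with the same image have `x₀⁻¹ x = a₀ a⁻¹ = b₀ b⁻¹`, so every fibre injects into `A/A ∩ B/B`.
With `X = S³` for `S = A² ∩ B²` and `A`, `B` symmetric this gives
`|S³| |A| |B| ≤ |A⁷| |B⁷| |S|`, and small tripling bounds `|A⁷| ≤ K⁵ |A|`, `|B⁷| ≤ L⁵ |B|`.
-/

open Finset Pointwise

namespace Finset

variable {G : Type*} [Group G] [DecidableEq G]

lemma card_fiber_mul_mul_le_card_div_inter (X A B : Finset G) (u v : G) :
    #{p ∈ X ×ˢ A ×ˢ B | (p.1 * p.2.1, p.1 * p.2.2) = (u, v)} ≤ #((A / A) ∩ (B / B)) := by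
  obtain hF | ⟨⟨x₀, a₀, b₀⟩, hp₀⟩ := Finset.eq_empty_or_nonempty
    {p ∈ X ×ˢ A ×ˢ B | (p.1 * p.2.1, p.1 * p.2.2) = (u, v)}
  · rw [hF, card_empty]
    exact Nat.zero_le _
  simp only [mem_filter, mem_product, Prod.mk.injEq] at hp₀
  obtain ⟨⟨-, ha₀, hb₀⟩, rfl, rfl⟩ := hp₀
  refine card_le_card_of_injOn (fun p ↦ x₀⁻¹ * p.1) ?_ ?_
  · rintro ⟨x, a, b⟩ hp
    simp only [coe_filter, mem_product, Prod.mk.injEq, Set.mem_ofPred_eq] at hp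
    obtain ⟨⟨-, ha, hb⟩, hxa, hxb⟩ := hp
    have hA : x₀⁻¹ * x = a₀ / a := by
      rw [div_eq_mul_inv, eq_mul_inv_iff_mul_eq, mul_assoc, hxa, inv_mul_cancel_left]
    have hB : x₀⁻¹ * x = b₀ / b := by
      rw [div_eq_mul_inv, eq_mul_inv_iff_mul_eq, mul_assoc, hxb, inv_mul_cancel_left]
    show x₀⁻¹ * x ∈ (A / A) ∩ (B / B)
    exact mem_inter.2 ⟨hA ▸ div_mem_div ha₀ ha, hB ▸ div_mem_div hb₀ hb⟩
  · rintro ⟨x, a, b⟩ hp ⟨x', a', b'⟩ hp' hxx'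
    simp only [coe_filter, mem_product, Prod.mk.injEq, Set.mem_ofPred_eq] at hp hp'
    obtain rfl : x = x' := mul_left_cancel hxx'
    obtain rfl : a = a' := mul_left_cancel (hp.2.1.trans hp'.2.1.symm)
    obtain rfl : b = b' := mul_left_cancel (hp.2.2.trans hp'.2.2.symm)
    rfl

lemma card_mul_card_mul_card_le_card_mul_mul_card_mul_mul_card_div_inter (X A B : Finset G) :
    #X * #A * #B ≤ #(X * A) * #(X * B) * #((A / A) ∩ (B / B)) := by
  calc #X * #A * #B = #(X ×ˢ A ×ˢ B) := by rw [card_product, card_product, mul_assoc]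
    _ ≤ #((A / A) ∩ (B / B)) * #((X * A) ×ˢ (X * B)) :=
      card_le_mul_card_image_of_maps_to
        (f := fun p ↦ (p.1 * p.2.1, p.1 * p.2.2))
        (fun p hp ↦ by
          simp only [mem_product] at hp ⊢
          exact ⟨mul_mem_mul hp.1 hp.2.1, mul_mem_mul hp.1 hp.2.2⟩)
        _ (fun uv _ ↦ card_fiber_mul_mul_le_card_div_inter X A B uv.1 uv.2)
    _ = #(X * A) * #(X * B) * #((A / A) ∩ (B / B)) := by rw [card_product, mul_comm]

lemma div_self_eq_sq_of_inv_eq {A : Finset G} (hA : A⁻¹ = A) : A / A = A ^ 2 := by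
  rw [div_eq_mul_inv, hA, sq]

lemma card_pow_three_inter_sq_mul_le {A B : Finset G} (hA : A⁻¹ = A) (hB : B⁻¹ = B) :
    #((A ^ 2 ∩ B ^ 2) ^ 3) * #A * #B ≤ #(A ^ 7) * #(B ^ 7) * #(A ^ 2 ∩ B ^ 2) := by
  set S := A ^ 2 ∩ B ^ 2
  have hSA : S ^ 3 * A ⊆ A ^ 7 := by
    calc S ^ 3 * A ⊆ (A ^ 2) ^ 3 * A :=
        mul_subset_mul_right (pow_subset_pow_left inter_subset_left)
      _ = A ^ 7 := by rw [← pow_mul, ← pow_succ]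
  have hSB : S ^ 3 * B ⊆ B ^ 7 := by
    calc S ^ 3 * B ⊆ (B ^ 2) ^ 3 * B :=
        mul_subset_mul_right (pow_subset_pow_left inter_subset_right)
      _ = B ^ 7 := by rw [← pow_mul, ← pow_succ]
  calc #(S ^ 3) * #A * #B ≤ #(S ^ 3 * A) * #(S ^ 3 * B) * #((A / A) ∩ (B / B)) :=
        card_mul_card_mul_card_le_card_mul_mul_card_mul_mul_card_div_inter _ _ _
    _ ≤ #(A ^ 7) * #(B ^ 7) * #S := by
      rw [div_self_eq_sq_of_inv_eq hA, div_self_eq_sq_of_inv_eq hB]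
      gcongr

end Finset

theorem stmt_15_general {G : Type*} [Group G] [DecidableEq G]
    (A B : Finset G) (K L : ℝ)
    (hAsym : A⁻¹ = A)
    (hBsym : B⁻¹ = B)
    (hA3 : ((A ^ 3).card : ℝ) ≤ K * A.card)
    (hB3 : ((B ^ 3).card : ℝ) ≤ L * B.card) :
    (((A ^ 2 ∩ B ^ 2) ^ 3).card : ℝ) ≤ (K * L) ^ 5 * (A ^ 2 ∩ B ^ 2).card := by
  obtain hS | hS := (A ^ 2 ∩ B ^ 2).eq_empty_or_nonempty
  · simp [hS]
  have hA : (A * A).Nonempty := sq A ▸ hS.mono inter_subset_left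
  have hB : (B * B).Nonempty := sq B ▸ hS.mono inter_subset_right
  have hAB : (0 : ℝ) < #A * #B := by
    have := card_pos.2 hA.of_mul_left
    have := card_pos.2 hB.of_mul_left
    positivity
  have hA7 : (#(A ^ 7) : ℝ) ≤ K ^ 5 * #A := by
    simpa using small_pow_of_small_tripling (m := 7) (by norm_num) hA3 hAsym
  have hB7 : (#(B ^ 7) : ℝ) ≤ L ^ 5 * #B := by
    simpa using small_pow_of_small_tripling (m := 7) (by norm_num) hB3 hBsym
  have hcount : (#((A ^ 2 ∩ B ^ 2) ^ 3) : ℝ) * #A * #B ≤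
      #(A ^ 7) * #(B ^ 7) * #(A ^ 2 ∩ B ^ 2) := by
    exact_mod_cast card_pow_three_inter_sq_mul_le hAsym hBsym
  refine le_of_mul_le_mul_right (a := (#A : ℝ) * #B) ?_ hAB
  calc _ = (#((A ^ 2 ∩ B ^ 2) ^ 3) : ℝ) * #A * #B := by ring
    _ ≤ #(A ^ 7) * #(B ^ 7) * #(A ^ 2 ∩ B ^ 2) := hcount
    _ ≤ (K ^ 5 * #A) * (L ^ 5 * #B) * #(A ^ 2 ∩ B ^ 2) := by
      gcongr
      exact (Nat.cast_nonneg _).trans hA7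
    _ = _ := by ring

theorem stmt_15 {G : Type*} [Group G] [DecidableEq G]
    (A B : Finset G) (K L : ℝ) (hK : 1 ≤ K) (hL : 1 ≤ L)
    (hAsym : A⁻¹ = A) (hAone : (1 : G) ∈ A)
    (hBsym : B⁻¹ = B) (hBone : (1 : G) ∈ B)
    (hA3 : ((A ^ 3).card : ℝ) ≤ K * A.card)
    (hB3 : ((B ^ 3).card : ℝ) ≤ L * B.card) :
    (((A ^ 2 ∩ B ^ 2) ^ 3).card : ℝ) ≤ (K * L) ^ 5 * (A ^ 2 ∩ B ^ 2).card :=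
  stmt_15_general A B K L hAsym hBsym hA3 hB3
end

section
/- If A is a K-approximate subgroup and B is an L-approximate subgroup of a group G, then A² ∩ B² is a (KL)³-approximate subgroup of G. -/
open Pointwise

theorem IsApproximateSubgroup.of_mul_subset {G : Type*} [Group G] {A : Set G} {K : ℝ}
    (hsym : A⁻¹ = A) (hone : (1 : G) ∈ A) (X : Finset G) (hX : (X.card : ℝ) ≤ K)
    (hcov : A * A ⊆ ↑X * A) : IsApproximateSubgroup K A where
  one_mem := hone
  inv_eq_self := hsym
  sq_covBySMul := ⟨X, hX, by rwa [sq]⟩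

theorem stmt_16 {G : Type*} [Group G]
    (A B : Set G) (K L : ℝ)
    (hAsym : A⁻¹ = A) (hAone : (1 : G) ∈ A)
    (hBsym : B⁻¹ = B) (hBone : (1 : G) ∈ B)
    (X : Finset G) (hX : (X.card : ℝ) ≤ K) (hAcov : A * A ⊆ ↑X * A)
    (Y : Finset G) (hY : (Y.card : ℝ) ≤ L) (hBcov : B * B ⊆ ↑Y * B) :
    (A ^ 2 ∩ B ^ 2)⁻¹ = A ^ 2 ∩ B ^ 2 ∧ (1 : G) ∈ A ^ 2 ∩ B ^ 2 ∧
      ∃ Z : Finset G, (Z.card : ℝ) ≤ (K * L) ^ 3 ∧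
        (A ^ 2 ∩ B ^ 2) * (A ^ 2 ∩ B ^ 2) ⊆ ↑Z * (A ^ 2 ∩ B ^ 2) := by
  have hA := IsApproximateSubgroup.of_mul_subset hAsym hAone X hX hAcov
  have hB := IsApproximateSubgroup.of_mul_subset hBsym hBone Y hY hBcov
  obtain ⟨hone, hsym, Z, hZ, hcov⟩ := hA.pow_inter_pow hB le_rfl le_rfl
  refine ⟨hsym, hone, Z, by simpa [mul_pow] using hZ, by rwa [← sq]⟩
end
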